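/- arXiv:2601.12821 — 5 statements merged into one kernel-verified Lean document; each statement's English description precedes it below -/
import Mathlib

section
/- For the 2D Lamé operator L_{λ,μ} and x ≠ 0, the columnwise application of L_{λ,μ} to the matrix-valued function ln|x| · |x|² I₂ equals (λ+5μ) I₂ + (2λ+6μ) ln|x| I₂ + (2λ+2μ) (x xᵀ)/|x|². -/
/-!
Off the origin, `|y|² ln|y| = s ln s / 2` with `s = y₁² + y₂²`, so its gradient is `(ln s + 1) y`
and its Hessian is `(ln s + 1) I₂ + 2 y yᵀ / s`, with Laplacian `2 ln s + 4`. The function is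
invariant under swapping the coordinates, which yields the `∂₂`-derivatives from the `∂₁`-ones.
On a column `g eᵢ` the Lamé operator is `μ Δg eᵢ + (λ+μ) ∇(∂ᵢ g)`, and `ln s = 2 ln|x|`.
-/

noncomputable def pd1 (f : ℝ × ℝ → ℝ) (x : ℝ × ℝ) : ℝ := deriv (fun t => f (t, x.2)) x.1
noncomputable def pd2 (f : ℝ × ℝ → ℝ) (x : ℝ × ℝ) : ℝ := deriv (fun t => f (x.1, t)) x.2
noncomputable def lap (f : ℝ × ℝ → ℝ) (x : ℝ × ℝ) : ℝ := pd1 (pd1 f) x + pd2 (pd2 f) x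

/-- The 2D Lamé operator `L u = μ Δu + (λ+μ) ∇(∇·u)` applied to a vector field. -/
noncomputable def lame (l m : ℝ) (u : ℝ × ℝ → ℝ × ℝ) (x : ℝ × ℝ) : ℝ × ℝ :=
  (m * lap (fun y => (u y).1) x +
     (l + m) * pd1 (fun y => pd1 (fun z => (u z).1) y + pd2 (fun z => (u z).2) y) x,
   m * lap (fun y => (u y).2) x +
     (l + m) * pd2 (fun y => pd1 (fun z => (u z).1) y + pd2 (fun z => (u z).2) y) x)

noncomputable def nrm (x : ℝ × ℝ) : ℝ := Real.sqrt (x.1 ^ 2 + x.2 ^ 2)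

open Real Topology

section PartialDerivatives

variable {f g : ℝ × ℝ → ℝ} {x : ℝ × ℝ}

theorem pd1_const (c : ℝ) : pd1 (fun _ => c) = fun _ => 0 := by
  ext x; simp [pd1]

theorem pd2_const (c : ℝ) : pd2 (fun _ => c) = fun _ => 0 := by
  ext x; simp [pd2]

theorem pd1_comp_swap (f : ℝ × ℝ → ℝ) : pd1 (f ∘ Prod.swap) = pd2 f ∘ Prod.swap := rfl

theorem pd2_comp_swap (f : ℝ × ℝ → ℝ) : pd2 (f ∘ Prod.swap) = pd1 f ∘ Prod.swap := rfl

theorem Filter.EventuallyEq.pd1_eq (h : f =ᶠ[𝓝 x] g) : pd1 f x = pd1 g x :=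
  (h.comp_tendsto ((continuous_id.prodMk continuous_const).tendsto x.1)).deriv_eq

theorem Filter.EventuallyEq.pd2_eq (h : f =ᶠ[𝓝 x] g) : pd2 f x = pd2 g x :=
  (h.comp_tendsto ((continuous_const.prodMk continuous_id).tendsto x.2)).deriv_eq

end PartialDerivatives

theorem lame_mk_zero (l m : ℝ) (g : ℝ × ℝ → ℝ) (x : ℝ × ℝ) :
    lame l m (fun y => (g y, 0)) x =
      (m * lap g x + (l + m) * pd1 (pd1 g) x, (l + m) * pd2 (pd1 g) x) := by
  simp only [lame, lap, pd1_const, pd2_const, add_zero, zero_add, mul_zero]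

theorem lame_zero_mk (l m : ℝ) (g : ℝ × ℝ → ℝ) (x : ℝ × ℝ) :
    lame l m (fun y => (0, g y)) x =
      ((l + m) * pd1 (pd2 g) x, m * lap g x + (l + m) * pd2 (pd2 g) x) := by
  simp only [lame, lap, pd1_const, pd2_const, add_zero, zero_add, mul_zero]

theorem fst_sq_add_snd_sq_ne_zero {x : ℝ × ℝ} (hx : x ≠ 0) : x.1 ^ 2 + x.2 ^ 2 ≠ 0 := by
  contrapose! hx
  obtain ⟨h1, h2⟩ := (add_eq_zero_iff_of_nonneg (sq_nonneg _) (sq_nonneg _)).1 hx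
  exact Prod.ext (pow_eq_zero_iff two_ne_zero |>.1 h1) (pow_eq_zero_iff two_ne_zero |>.1 h2)

theorem log_nrm (x : ℝ × ℝ) : log (nrm x) = log (x.1 ^ 2 + x.2 ^ 2) / 2 :=
  log_sqrt (by positivity)

noncomputable def normSqMulLogNorm (y : ℝ × ℝ) : ℝ := log (nrm y) * (y.1 ^ 2 + y.2 ^ 2)

theorem normSqMulLogNorm_apply (y : ℝ × ℝ) :
    normSqMulLogNorm y = (y.1 ^ 2 + y.2 ^ 2) * log (y.1 ^ 2 + y.2 ^ 2) / 2 := by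
  rw [normSqMulLogNorm, log_nrm]; ring

theorem normSqMulLogNorm_comp_swap : normSqMulLogNorm ∘ Prod.swap = normSqMulLogNorm := by
  ext y; simp [normSqMulLogNorm_apply, add_comm]

theorem pd1_normSqMulLogNorm {x : ℝ × ℝ} (hx : x ≠ 0) :
    pd1 normSqMulLogNorm x = x.1 * (log (x.1 ^ 2 + x.2 ^ 2) + 1) := by
  have hs := fst_sq_add_snd_sq_ne_zero hx
  have hsq : HasDerivAt (fun t => t ^ 2 + x.2 ^ 2) (2 * x.1) x.1 := by
    simpa using (hasDerivAt_pow 2 x.1).add_const (x.2 ^ 2)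
  simp only [pd1, normSqMulLogNorm_apply]
  refine (((hasDerivAt_mul_log hs).comp x.1 hsq).div_const 2).deriv.trans ?_
  ring

theorem pd1_normSqMulLogNorm_eventuallyEq {x : ℝ × ℝ} (hx : x ≠ 0) :
    pd1 normSqMulLogNorm =ᶠ[𝓝 x] fun y => y.1 * (log (y.1 ^ 2 + y.2 ^ 2) + 1) :=
  (eventually_ne_nhds hx).mono fun _ => pd1_normSqMulLogNorm

theorem pd1_pd1_normSqMulLogNorm {x : ℝ × ℝ} (hx : x ≠ 0) :
    pd1 (pd1 normSqMulLogNorm) x =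
      log (x.1 ^ 2 + x.2 ^ 2) + 1 + 2 * x.1 ^ 2 / (x.1 ^ 2 + x.2 ^ 2) := by
  have hs := fst_sq_add_snd_sq_ne_zero hx
  have key : HasDerivAt (fun t => t * (log (t ^ 2 + x.2 ^ 2) + 1))
      (log (x.1 ^ 2 + x.2 ^ 2) + 1 + 2 * x.1 ^ 2 / (x.1 ^ 2 + x.2 ^ 2)) x.1 :=
    ((hasDerivAt_id' x.1).mul ((((hasDerivAt_pow 2 x.1).add_const _).log hs).add_const 1)).congr_deriv
      (by field_simp; ring)
  rw [(pd1_normSqMulLogNorm_eventuallyEq hx).pd1_eq]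
  exact key.deriv

theorem pd2_pd1_normSqMulLogNorm {x : ℝ × ℝ} (hx : x ≠ 0) :
    pd2 (pd1 normSqMulLogNorm) x = 2 * x.1 * x.2 / (x.1 ^ 2 + x.2 ^ 2) := by
  have hs := fst_sq_add_snd_sq_ne_zero hx
  have key : HasDerivAt (fun t => x.1 * (log (x.1 ^ 2 + t ^ 2) + 1))
      (2 * x.1 * x.2 / (x.1 ^ 2 + x.2 ^ 2)) x.2 :=
    (((((hasDerivAt_pow 2 x.2).const_add _).log hs).add_const 1).const_mul x.1).congr_deriv
      (by field_simp; ring)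
  rw [(pd1_normSqMulLogNorm_eventuallyEq hx).pd2_eq]
  exact key.deriv

theorem pd2_normSqMulLogNorm : pd2 normSqMulLogNorm = pd1 normSqMulLogNorm ∘ Prod.swap := by
  rw [← pd2_comp_swap, normSqMulLogNorm_comp_swap]

theorem pd2_pd2_normSqMulLogNorm {x : ℝ × ℝ} (hx : x ≠ 0) :
    pd2 (pd2 normSqMulLogNorm) x =
      log (x.1 ^ 2 + x.2 ^ 2) + 1 + 2 * x.2 ^ 2 / (x.1 ^ 2 + x.2 ^ 2) := by
  rw [pd2_normSqMulLogNorm, pd2_comp_swap, Function.comp_apply,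
    pd1_pd1_normSqMulLogNorm (Prod.swap_injective.ne hx)]
  simp [add_comm]

theorem pd1_pd2_normSqMulLogNorm {x : ℝ × ℝ} (hx : x ≠ 0) :
    pd1 (pd2 normSqMulLogNorm) x = 2 * x.1 * x.2 / (x.1 ^ 2 + x.2 ^ 2) := by
  rw [pd2_normSqMulLogNorm, pd1_comp_swap, Function.comp_apply,
    pd2_pd1_normSqMulLogNorm (Prod.swap_injective.ne hx)]
  simp only [Prod.fst_swap, Prod.snd_swap]
  ring

theorem lap_normSqMulLogNorm {x : ℝ × ℝ} (hx : x ≠ 0) :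
    lap normSqMulLogNorm x = 2 * log (x.1 ^ 2 + x.2 ^ 2) + 4 := by
  have hs := fst_sq_add_snd_sq_ne_zero hx
  rw [lap, pd1_pd1_normSqMulLogNorm hx, pd2_pd2_normSqMulLogNorm hx]
  field_simp
  ring

/-- `L_{λ,μ}(ln|x| |x|² I₂) = (λ+5μ) I₂ + (2λ+6μ) ln|x| I₂ + (2λ+2μ) x xᵀ/|x|²`, columnwise. -/
theorem lame_log_normSq_id (l m : ℝ) (x : ℝ × ℝ) (hx : x ≠ 0) :
    lame l m (fun y => (Real.log (nrm y) * (y.1 ^ 2 + y.2 ^ 2), 0)) x =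
      ((l + 5 * m) + (2 * l + 6 * m) * Real.log (nrm x)
          + (2 * l + 2 * m) * (x.1 * x.1) / (x.1 ^ 2 + x.2 ^ 2),
        (2 * l + 2 * m) * (x.2 * x.1) / (x.1 ^ 2 + x.2 ^ 2)) ∧
    lame l m (fun y => (0, Real.log (nrm y) * (y.1 ^ 2 + y.2 ^ 2))) x =
      ((2 * l + 2 * m) * (x.1 * x.2) / (x.1 ^ 2 + x.2 ^ 2),
        (l + 5 * m) + (2 * l + 6 * m) * Real.log (nrm x)
          + (2 * l + 2 * m) * (x.2 * x.2) / (x.1 ^ 2 + x.2 ^ 2)) := by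
  refine ⟨(lame_mk_zero l m normSqMulLogNorm x).trans ?_,
    (lame_zero_mk l m normSqMulLogNorm x).trans ?_⟩ <;>
  · simp only [lap_normSqMulLogNorm hx, pd1_pd1_normSqMulLogNorm hx, pd2_pd2_normSqMulLogNorm hx,
      pd2_pd1_normSqMulLogNorm hx, pd1_pd2_normSqMulLogNorm hx, log_nrm, Prod.mk.injEq]
    constructor <;> ring
end

section
/- For the 2D Lamé operator L_{λ,μ} and x ≠ 0, the columnwise application of L_{λ,μ} to the matrix-valued function ln|x| · x xᵀ equals (λ+μ) I₂ + (3λ+5μ) ln|x| I₂ + (3λ+7μ) (x xᵀ)/|x|². -/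
open Filter Topology

lemma fst_sq_add_snd_sq_pos {y : ℝ × ℝ} (hy : y ≠ 0) : 0 < y.1 ^ 2 + y.2 ^ 2 := by
  rcases y with ⟨a, b⟩
  have : a ≠ 0 ∨ b ≠ 0 := by
    by_contra! h0
    exact hy (by simp [h0])
  rcases this with h | h <;> positivity

lemma nrm_swap (y : ℝ × ℝ) : nrm y.swap = nrm y := by
  simp only [nrm, Prod.fst_swap, Prod.snd_swap, add_comm]

lemma pd1_congr {f g : ℝ × ℝ → ℝ} {x : ℝ × ℝ} (h : f =ᶠ[𝓝 x] g) : pd1 f x = pd1 g x :=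
  EventuallyEq.deriv_eq <|
    (Continuous.tendsto (f := fun t : ℝ => (t, x.2)) (by fun_prop) x.1).eventually h

lemma pd2_eq_pd1_comp_swap (f : ℝ × ℝ → ℝ) (x : ℝ × ℝ) :
    pd2 f x = pd1 (f ∘ Prod.swap) x.swap := rfl

lemma pd2_congr {f g : ℝ × ℝ → ℝ} {x : ℝ × ℝ} (h : f =ᶠ[𝓝 x] g) : pd2 f x = pd2 g x :=
  pd1_congr (h.comp_tendsto (continuous_swap.tendsto x.swap))

lemma lap_eq_pd1_pd1_add (f : ℝ × ℝ → ℝ) (x : ℝ × ℝ) :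
    lap f x = pd1 (pd1 f) x + pd1 (pd1 (f ∘ Prod.swap)) x.swap := rfl

lemma lame_mk (l m : ℝ) (f g : ℝ × ℝ → ℝ) (x : ℝ × ℝ) :
    lame l m (fun y => (f y, g y)) x =
      (m * lap f x + (l + m) * pd1 (fun y => pd1 f y + pd2 g y) x,
        m * lap g x + (l + m) * pd2 (fun y => pd1 f y + pd2 g y) x) := rfl

lemma lame_swap_comp_swap (l m : ℝ) (u : ℝ × ℝ → ℝ × ℝ) (x : ℝ × ℝ) :
    lame l m (Prod.swap ∘ u ∘ Prod.swap) x = (lame l m u x.swap).swap := by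
  have hlap (f : ℝ × ℝ → ℝ) : lap (f ∘ Prod.swap) x = lap f x.swap := add_comm _ _
  have hdiv : (fun y => pd1 (fun z => (u z.swap).2) y + pd2 (fun z => (u z.swap).1) y) =
      (fun y => pd1 (fun z => (u z).1) y + pd2 (fun z => (u z).2) y) ∘ Prod.swap :=
    funext fun _ => add_comm _ _
  simp only [lame, Function.comp_apply, Prod.fst_swap, Prod.snd_swap, Prod.swap_prod_mk]
  rw [hdiv]
  exact Prod.ext (congrArg (· + _) (congrArg _ (hlap fun z => (u z).2)))
    (congrArg (· + _) (congrArg _ (hlap fun z => (u z).1)))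

lemma hasDerivAt_log_nrm_fst {a b : ℝ} (h : (a, b) ≠ 0) :
    HasDerivAt (fun t => Real.log (nrm (t, b))) (a / (a ^ 2 + b ^ 2)) a := by
  have hr := fst_sq_add_snd_sq_pos h
  have hlog : (fun t => Real.log (nrm (t, b))) = fun t => Real.log (t ^ 2 + b ^ 2) / 2 :=
    funext fun t => Real.log_sqrt (by positivity)
  rw [hlog]
  refine ((((hasDerivAt_pow 2 a).add_const (b ^ 2)).log hr.ne').div_const 2).congr_deriv ?_
  field_simp
  ring

lemma hasDerivAt_log_nrm_snd {a b : ℝ} (h : (a, b) ≠ 0) :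
    HasDerivAt (fun t => Real.log (nrm (a, t))) (b / (a ^ 2 + b ^ 2)) b := by
  convert hasDerivAt_log_nrm_fst ((Prod.swap_injective.ne_iff' Prod.swap_zero).2 h) using 1
  · exact funext fun t => congrArg Real.log (nrm_swap (t, a))
  · ring

noncomputable def logNrmQuad (α β γ : ℝ) (y : ℝ × ℝ) : ℝ :=
  Real.log (nrm y) * (α * y.1 ^ 2 + β * y.1 * y.2 + γ * y.2 ^ 2)

section LogNrmQuad

variable (α β γ : ℝ)

lemma logNrmQuad_comp_swap : logNrmQuad α β γ ∘ Prod.swap = logNrmQuad γ β α := by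
  funext y
  simp only [Function.comp_apply, logNrmQuad, nrm_swap, Prod.fst_swap, Prod.snd_swap]
  ring

lemma hasDerivAt_quad_fst (a b : ℝ) :
    HasDerivAt (fun t => α * t ^ 2 + β * t * b + γ * b ^ 2) (2 * α * a + β * b) a := by
  refine ((((hasDerivAt_pow 2 a).const_mul α).add
    (((hasDerivAt_id a).const_mul β).mul_const b)).add_const (γ * b ^ 2)).congr_deriv ?_
  norm_num
  ring

lemma pd1_logNrmQuad {y : ℝ × ℝ} (hy : y ≠ 0) :
    pd1 (logNrmQuad α β γ) y =
      y.1 * (α * y.1 ^ 2 + β * y.1 * y.2 + γ * y.2 ^ 2) / (y.1 ^ 2 + y.2 ^ 2)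
        + Real.log (nrm y) * (2 * α * y.1 + β * y.2) := by
  obtain ⟨a, b⟩ := y
  exact ((hasDerivAt_log_nrm_fst hy).mul (hasDerivAt_quad_fst α β γ a b)).deriv.trans (by ring)

lemma pd1_pd1_logNrmQuad {x : ℝ × ℝ} (hx : x ≠ 0) :
    pd1 (pd1 (logNrmQuad α β γ)) x =
      (x.2 ^ 2 - x.1 ^ 2) * (α * x.1 ^ 2 + β * x.1 * x.2 + γ * x.2 ^ 2) / (x.1 ^ 2 + x.2 ^ 2) ^ 2
        + 2 * x.1 * (2 * α * x.1 + β * x.2) / (x.1 ^ 2 + x.2 ^ 2)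
        + 2 * α * Real.log (nrm x) := by
  rw [pd1_congr (by filter_upwards [eventually_ne_nhds hx] with y hy using pd1_logNrmQuad α β γ hy)]
  obtain ⟨a, b⟩ := x
  have hr := fst_sq_add_snd_sq_pos hx
  have hfrac := ((hasDerivAt_id a).mul (hasDerivAt_quad_fst α β γ a b)).div
    ((hasDerivAt_pow 2 a).add_const (b ^ 2)) hr.ne'
  have hlin := ((hasDerivAt_id a).const_mul (2 * α)).add_const (β * b)
  refine ((hfrac.add ((hasDerivAt_log_nrm_fst hx).mul hlin)).deriv).trans ?_
  simp only [Pi.mul_apply, id]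
  field_simp
  ring

lemma lap_logNrmQuad {x : ℝ × ℝ} (hx : x ≠ 0) :
    lap (logNrmQuad α β γ) x =
      4 * (α * x.1 ^ 2 + β * x.1 * x.2 + γ * x.2 ^ 2) / (x.1 ^ 2 + x.2 ^ 2)
        + 2 * (α + γ) * Real.log (nrm x) := by
  have hx' : x.swap ≠ 0 := (Prod.swap_injective.ne_iff' Prod.swap_zero).2 hx
  have hr := fst_sq_add_snd_sq_pos hx
  rw [lap_eq_pd1_pd1_add, logNrmQuad_comp_swap, pd1_pd1_logNrmQuad α β γ hx,
    pd1_pd1_logNrmQuad γ β α hx', nrm_swap]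
  simp only [Prod.fst_swap, Prod.snd_swap, add_comm (x.2 ^ 2)]
  field_simp
  ring

end LogNrmQuad

lemma pd1_add_pd2_logNrmQuad {y : ℝ × ℝ} (hy : y ≠ 0) :
    pd1 (logNrmQuad 1 0 0) y + pd2 (logNrmQuad 0 1 0) y = y.1 * (1 + 3 * Real.log (nrm y)) := by
  have hy' : y.swap ≠ 0 := (Prod.swap_injective.ne_iff' Prod.swap_zero).2 hy
  have hr := fst_sq_add_snd_sq_pos hy
  rw [pd2_eq_pd1_comp_swap, logNrmQuad_comp_swap, pd1_logNrmQuad _ _ _ hy,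
    pd1_logNrmQuad _ _ _ hy', nrm_swap]
  simp only [Prod.fst_swap, Prod.snd_swap, add_comm (y.2 ^ 2)]
  field_simp
  ring

lemma pd1_fst_mul_log_nrm {x : ℝ × ℝ} (hx : x ≠ 0) (c : ℝ) :
    pd1 (fun y => y.1 * (1 + c * Real.log (nrm y))) x =
      1 + c * Real.log (nrm x) + c * x.1 ^ 2 / (x.1 ^ 2 + x.2 ^ 2) := by
  obtain ⟨a, b⟩ := x
  refine ((hasDerivAt_id a).mul
    (((hasDerivAt_log_nrm_fst hx).const_mul c).const_add 1)).deriv.trans ?_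
  simp only [id]
  ring

lemma pd2_fst_mul_log_nrm {x : ℝ × ℝ} (hx : x ≠ 0) (c : ℝ) :
    pd2 (fun y => y.1 * (1 + c * Real.log (nrm y))) x = c * x.1 * x.2 / (x.1 ^ 2 + x.2 ^ 2) := by
  obtain ⟨a, b⟩ := x
  refine ((((hasDerivAt_log_nrm_snd hx).const_mul c).const_add 1).const_mul a).deriv.trans ?_
  ring

lemma lame_logNrmQuad {l m : ℝ} {x : ℝ × ℝ} (hx : x ≠ 0) :
    lame l m (fun y => (logNrmQuad 1 0 0 y, logNrmQuad 0 1 0 y)) x =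
      ((l + m) + (3 * l + 5 * m) * Real.log (nrm x)
          + (3 * l + 7 * m) * (x.1 * x.1) / (x.1 ^ 2 + x.2 ^ 2),
        (3 * l + 7 * m) * (x.2 * x.1) / (x.1 ^ 2 + x.2 ^ 2)) := by
  have hdiv : (fun y => pd1 (logNrmQuad 1 0 0) y + pd2 (logNrmQuad 0 1 0) y)
      =ᶠ[𝓝 x] fun y => y.1 * (1 + 3 * Real.log (nrm y)) := by
    filter_upwards [eventually_ne_nhds hx] with y hy using pd1_add_pd2_logNrmQuad hy
  have hr := fst_sq_add_snd_sq_pos hx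
  rw [lame_mk, pd1_congr hdiv, pd2_congr hdiv, lap_logNrmQuad _ _ _ hx, lap_logNrmQuad _ _ _ hx,
    pd1_fst_mul_log_nrm hx, pd2_fst_mul_log_nrm hx]
  ext <;> field_simp <;> ring

/-- `L_{λ,μ}(ln|x| x xᵀ) = (λ+μ) I₂ + (3λ+5μ) ln|x| I₂ + (3λ+7μ) x xᵀ/|x|²`, columnwise. -/
theorem lame_log_xxT (l m : ℝ) (x : ℝ × ℝ) (hx : x ≠ 0) :
    lame l m (fun y => (Real.log (nrm y) * (y.1 * y.1), Real.log (nrm y) * (y.2 * y.1))) x =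
      ((l + m) + (3 * l + 5 * m) * Real.log (nrm x)
          + (3 * l + 7 * m) * (x.1 * x.1) / (x.1 ^ 2 + x.2 ^ 2),
        (3 * l + 7 * m) * (x.2 * x.1) / (x.1 ^ 2 + x.2 ^ 2)) ∧
    lame l m (fun y => (Real.log (nrm y) * (y.1 * y.2), Real.log (nrm y) * (y.2 * y.2))) x =
      ((3 * l + 7 * m) * (x.1 * x.2) / (x.1 ^ 2 + x.2 ^ 2),
        (l + m) + (3 * l + 5 * m) * Real.log (nrm x)
          + (3 * l + 7 * m) * (x.2 * x.2) / (x.1 ^ 2 + x.2 ^ 2)) := by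
  set u := fun y => (logNrmQuad 1 0 0 y, logNrmQuad 0 1 0 y)
  have hu₁ : (fun y => (Real.log (nrm y) * (y.1 * y.1), Real.log (nrm y) * (y.2 * y.1))) = u := by
    funext y
    ext <;> simp only [u, logNrmQuad] <;> ring
  have hu₂ : (fun y => (Real.log (nrm y) * (y.1 * y.2), Real.log (nrm y) * (y.2 * y.2))) =
      Prod.swap ∘ u ∘ Prod.swap := by
    funext y
    ext <;>
      simp only [u, logNrmQuad, Function.comp_apply, Prod.fst_swap, Prod.snd_swap, nrm_swap] <;>
      ring
  have hx' : x.swap ≠ 0 := (Prod.swap_injective.ne_iff' Prod.swap_zero).2 hx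
  refine ⟨hu₁ ▸ lame_logNrmQuad hx, ?_⟩
  rw [hu₂, lame_swap_comp_swap, lame_logNrmQuad hx', nrm_swap]
  simp only [Prod.swap_prod_mk, Prod.fst_swap, Prod.snd_swap, add_comm (x.2 ^ 2)]
end

section
/- Let ∂D be the circle of radius R centered at the origin in ℝ². Then for every x with |x| < R, ∫_{∂D} (1/(2π)) ln|x - y| (y₂, -y₁)ᵀ ds(y) = -(R/2) (x₂, -x₁)ᵀ. -/
/-!
Identify the plane with `ℂ`. For `‖y‖ = R` we have `|x - y| = |R - x̄ y / R|`, so `log |x - y|` is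
the real part of `g y = log (R - x̄ y / R)`, which is holomorphic near the closed disk since
`‖x‖ < R`. On the circle `conj y = R² / y`, hence `Re (g y) · y = (y g y + R² conj (y⁻¹ g y)) / 2`:
Cauchy's theorem kills the integral of the first term and Cauchy's formula evaluates the second
through `g'(0) = -x̄ / R²`. This gives `∫ log |x - y| · y dθ = -π x`, whose real and imaginary
parts are the two components of the claim.
-/

open Real

namespace Complex

open Metric MeasureTheory
open scoped ComplexConjugate

lemma ofReal_re_mul_eq_add_conj_div_two {w z : ℂ} (hz : z ≠ 0) :
    (w.re : ℂ) * z = (z * w + ‖z‖ ^ 2 * conj (z⁻¹ * w)) / 2 := by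
  have hconj : conj z = ‖z‖ ^ 2 / z := by
    rw [eq_div_iff hz, mul_comm, mul_conj, normSq_eq_norm_sq, ofReal_pow]
  have hnorm : (‖z‖ : ℂ) ≠ 0 := ofReal_ne_zero.mpr (norm_ne_zero_iff.mpr hz)
  rw [re_eq_add_conj, map_mul, map_inv₀, hconj]
  field_simp

lemma norm_sub_eq_norm_sub_conj_mul_div {x y : ℂ} {R : ℝ} (hy : ‖y‖ = R) (hR : 0 < R) :
    ‖x - y‖ = ‖R - conj x * y / R‖ := by
  have hyy : y * conj y = R ^ 2 := by
    rw [mul_conj, normSq_eq_norm_sq, hy, ofReal_pow]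
  have hfactor : (R : ℂ) - conj x * y / R = y * conj (y - x) / R := by
    rw [map_sub, mul_sub, hyy]
    field_simp
  rw [hfactor, norm_div, norm_mul, RCLike.norm_conj, hy, norm_real, norm_sub_rev,
    Real.norm_eq_abs, abs_of_pos hR, mul_div_cancel_left₀ _ hR.ne']

variable {f : ℂ → ℂ} {c : ℂ} {R : ℝ}

lemma integral_circleMap_mul_eq_zero (hR : 0 ≤ R)
    (hf : DifferentiableOn ℂ f (closedBall c R)) :
    ∫ θ in 0..2 * π, circleMap 0 R θ * f (circleMap c R θ) = 0 := by
  have h := (hf.mono closure_ball_subset_closedBall).diffContOnCl.circleIntegral_eq_zero hR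
  simp_rw [circleIntegral, deriv_circleMap, smul_eq_mul, mul_right_comm _ I,
    intervalIntegral.integral_mul_const, mul_eq_zero, I_ne_zero, or_false] at h
  exact h

lemma integral_inv_circleMap_mul_eq_deriv (hR : 0 < R)
    (hf : DifferentiableOn ℂ f (closedBall c R)) :
    ∫ θ in 0..2 * π, (circleMap 0 R θ)⁻¹ * f (circleMap c R θ) = 2 * π * deriv f c := by
  have h := hf.deriv_eq_smul_circleIntegral hR
  have hne : ∀ θ, circleMap 0 R θ ≠ 0 := fun θ => circleMap_ne_center hR.ne'
  have hintegrand : ∀ θ,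
      circleMap 0 R θ * I * (1 / circleMap 0 R θ ^ 2 * f (circleMap c R θ)) =
        I * ((circleMap 0 R θ)⁻¹ * f (circleMap c R θ)) := fun θ => by
    field_simp [hne θ]
  simp_rw [circleIntegral, deriv_circleMap, circleMap_sub_center, smul_eq_mul, hintegrand,
    intervalIntegral.integral_const_mul] at h
  exact mul_left_cancel₀ I_ne_zero (by rw [h]; ring)

lemma integral_re_mul_circleMap (hR : 0 < R) (hf : DifferentiableOn ℂ f (closedBall c R)) :
    ∫ θ in 0..2 * π, ((f (circleMap c R θ)).re : ℂ) * circleMap 0 R θ =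
      π * R ^ 2 * conj (deriv f c) := by
  have hne : ∀ θ, circleMap 0 R θ ≠ 0 := fun θ => circleMap_ne_center hR.ne'
  have hfc : Continuous fun θ => f (circleMap c R θ) :=
    hf.continuousOn.comp_continuous (continuous_circleMap c R) (circleMap_mem_closedBall c hR.le)
  have hA : IntervalIntegrable (fun θ => circleMap 0 R θ * f (circleMap c R θ)) volume 0 (2 * π) :=
    ((continuous_circleMap 0 R).mul hfc).intervalIntegrable _ _
  have hB : IntervalIntegrable
      (fun θ => (R : ℂ) ^ 2 * conj ((circleMap 0 R θ)⁻¹ * f (circleMap c R θ))) volume 0 (2 * π) :=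
    ((continuous_conj.comp (((continuous_circleMap 0 R).inv₀ hne).mul hfc)).const_mul
      _).intervalIntegrable _ _
  simp_rw [ofReal_re_mul_eq_add_conj_div_two (hne _), norm_circleMap_zero, abs_of_pos hR]
  rw [intervalIntegral.integral_div, intervalIntegral.integral_add hA hB,
    intervalIntegral.integral_const_mul, intervalIntegral.intervalIntegral_conj,
    integral_circleMap_mul_eq_zero hR.le hf, integral_inv_circleMap_mul_eq_deriv hR hf]
  simp only [map_mul, map_ofNat, conj_ofReal]
  ring

lemma sub_conj_mul_div_mem_slitPlane {x z : ℂ} (hx : ‖x‖ < R) (hz : ‖z‖ ≤ R) :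
    (R : ℂ) - conj x * z / R ∈ slitPlane := by
  have hR : 0 < R := (norm_nonneg x).trans_lt hx
  have hlt : ‖conj x * z / R‖ < R := by
    rw [norm_div, norm_mul, RCLike.norm_conj, norm_real, Real.norm_of_nonneg hR.le,
      div_lt_iff₀ hR]
    nlinarith [norm_nonneg x, norm_nonneg z]
  refine mem_slitPlane_iff.mpr (Or.inl ?_)
  rw [sub_re, ofReal_re]
  linarith [re_le_norm (conj x * z / R)]

lemma integral_log_norm_sub_circleMap_mul {x : ℂ} (hx : ‖x‖ < R) :
    ∫ θ in 0..2 * π, (Real.log ‖x - circleMap 0 R θ‖ : ℂ) * circleMap 0 R θ = -π * x := by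
  have hR : 0 < R := (norm_nonneg x).trans_lt hx
  have hR' : (R : ℂ) ≠ 0 := ofReal_ne_zero.mpr hR.ne'
  set g : ℂ → ℂ := fun z => log (R - conj x * z / R)
  have hslit : ∀ z ∈ closedBall (0 : ℂ) R, (R : ℂ) - conj x * z / R ∈ slitPlane :=
    fun z hz => sub_conj_mul_div_mem_slitPlane hx (by simpa using hz)
  have hg : DifferentiableOn ℂ g (closedBall 0 R) := fun z hz =>
    (DifferentiableAt.clog (f := fun z => (R : ℂ) - conj x * z / R) (by fun_prop)
      (hslit z hz)).differentiableWithinAt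
  have hg' : deriv g 0 = -conj x / R ^ 2 := by
    have hd : HasDerivAt g _ 0 := ((((hasDerivAt_id' (0 : ℂ)).const_mul (conj x)).div_const
      (R : ℂ)).const_sub (R : ℂ)).clog (hslit 0 (mem_closedBall_self hR.le))
    rw [hd.deriv]
    field_simp
    simp
  have hlog : ∀ θ, Real.log ‖x - circleMap 0 R θ‖ = (g (circleMap 0 R θ)).re := fun θ => by
    rw [log_re, norm_sub_eq_norm_sub_conj_mul_div (by rw [norm_circleMap_zero, abs_of_pos hR]) hR]
  simp_rw [hlog, integral_re_mul_circleMap hR hg, hg']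
  rw [map_div₀, map_neg, conj_conj, map_pow, conj_ofReal]
  field_simp

lemma intervalIntegrable_log_norm_sub_circleMap_mul {x : ℂ} (hx : ‖x‖ ≠ |R|) (a b : ℝ) :
    IntervalIntegrable (fun θ => (Real.log ‖x - circleMap 0 R θ‖ : ℂ) * circleMap 0 R θ)
      volume a b := by
  have hne : ∀ θ, ‖x - circleMap 0 R θ‖ ≠ 0 := fun θ => by
    rw [norm_ne_zero_iff, sub_ne_zero]
    rintro rfl
    simp [norm_circleMap_zero] at hx
  refine (Continuous.mul ?_ (continuous_circleMap 0 R)).intervalIntegrable a b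
  exact continuous_ofReal.comp ((continuous_const.sub (continuous_circleMap 0 R)).norm.log hne)

lemma integral_log_norm_sub_circleMap_mul_cos {x : ℂ} (hx : ‖x‖ < R) :
    ∫ θ in 0..2 * π, Real.log ‖x - circleMap 0 R θ‖ * (R * Real.cos θ) = -(π * x.re) := by
  have h := intervalIntegral.intervalIntegral_re
    (intervalIntegrable_log_norm_sub_circleMap_mul (hx.trans_le (le_abs_self R)).ne 0 (2 * π))
  have hre : ∀ θ, (circleMap 0 R θ).re = R * Real.cos θ := fun θ => by simp [circleMap]
  simpa only [RCLike.re_to_complex, re_ofReal_mul, hre, integral_log_norm_sub_circleMap_mul hx,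
    neg_mul, neg_re] using h

lemma integral_log_norm_sub_circleMap_mul_sin {x : ℂ} (hx : ‖x‖ < R) :
    ∫ θ in 0..2 * π, Real.log ‖x - circleMap 0 R θ‖ * (R * Real.sin θ) = -(π * x.im) := by
  have h := intervalIntegral.intervalIntegral_im
    (intervalIntegrable_log_norm_sub_circleMap_mul (hx.trans_le (le_abs_self R)).ne 0 (2 * π))
  have him : ∀ θ, (circleMap 0 R θ).im = R * Real.sin θ := fun θ => by simp [circleMap]
  simpa only [RCLike.im_to_complex, im_ofReal_mul, him, integral_log_norm_sub_circleMap_mul hx,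
    neg_mul, neg_im] using h

end Complex

theorem circle_log_integral_general (R : ℝ) (x : ℝ × ℝ)
    (hx : Real.sqrt (x.1 ^ 2 + x.2 ^ 2) < R) :
    (∫ θ in (0:ℝ)..(2 * π),
        (1 / (2 * π)) * Real.log (Real.sqrt ((x.1 - R * Real.cos θ) ^ 2
          + (x.2 - R * Real.sin θ) ^ 2)) * (R * Real.sin θ) * R)
      = -(R / 2) * x.2 ∧
    (∫ θ in (0:ℝ)..(2 * π),
        (1 / (2 * π)) * Real.log (Real.sqrt ((x.1 - R * Real.cos θ) ^ 2
          + (x.2 - R * Real.sin θ) ^ 2)) * (-(R * Real.cos θ)) * R)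
      = -(R / 2) * (-x.1) := by
  set z : ℂ := ⟨x.1, x.2⟩
  have hz : ‖z‖ < R := by rwa [Complex.norm_eq_sqrt_sq_add_sq]
  have hnorm : ∀ θ, √((x.1 - R * Real.cos θ) ^ 2 + (x.2 - R * Real.sin θ) ^ 2) =
      ‖z - circleMap 0 R θ‖ := fun θ => by
    simp [Complex.norm_eq_sqrt_sq_add_sq, circleMap, z]
  simp_rw [hnorm]
  constructor
  · calc _ = R / (2 * π) *
          ∫ θ in 0..2 * π, Real.log ‖z - circleMap 0 R θ‖ * (R * Real.sin θ) := by
          rw [← intervalIntegral.integral_const_mul]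
          congr with θ
          ring
      _ = -(R / 2) * x.2 := by
          rw [Complex.integral_log_norm_sub_circleMap_mul_sin hz]
          field_simp
          rfl
  · calc _ = -(R / (2 * π)) *
          ∫ θ in 0..2 * π, Real.log ‖z - circleMap 0 R θ‖ * (R * Real.cos θ) := by
          rw [← intervalIntegral.integral_const_mul]
          congr with θ
          ring
      _ = -(R / 2) * (-x.1) := by
          rw [Complex.integral_log_norm_sub_circleMap_mul_cos hz]
          field_simp
          rfl

/-- For `x` inside the disk of radius `R`,
`∫_{∂D} (1/(2π)) ln|x-y| (y₂,-y₁)ᵀ ds(y) = -(R/2)(x₂,-x₁)ᵀ`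
(the circle parametrized by `y = (R cos θ, R sin θ)`, `ds = R dθ`). -/
theorem circle_log_integral (R : ℝ) (hR : 0 < R) (x : ℝ × ℝ)
    (hx : Real.sqrt (x.1 ^ 2 + x.2 ^ 2) < R) :
    (∫ θ in (0:ℝ)..(2 * π),
        (1 / (2 * π)) * Real.log (Real.sqrt ((x.1 - R * Real.cos θ) ^ 2
          + (x.2 - R * Real.sin θ) ^ 2)) * (R * Real.sin θ) * R)
      = -(R / 2) * x.2 ∧
    (∫ θ in (0:ℝ)..(2 * π),
        (1 / (2 * π)) * Real.log (Real.sqrt ((x.1 - R * Real.cos θ) ^ 2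
          + (x.2 - R * Real.sin θ) ^ 2)) * (-(R * Real.cos θ)) * R)
      = -(R / 2) * (-x.1) :=
  circle_log_integral_general R x hx
end

section
/- Let ∂D be the circle of radius R centered at the origin in ℝ². Then for every x with |x| < R, ∫_{∂D} (1/(2π)) ((x-y)(x-y)ᵀ/|x-y|²) (y₂, -y₁)ᵀ ds(y) = (R/2) (x₂, -x₁)ᵀ. -/
/-!
Identify `ℝ²` with `ℂ`, so that `(y₂, -y₁)` is `-I * y`. The projection of `v` onto the line
through `u ≠ 0` is `(v + (u / ū) v̄) / 2`, and on the circle `|y| = R` we have `ȳ = R² / y`. Hence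
the integrand is the restriction to the circle of
`(I / 2) (R² (x - y) / (x̄ y - R²) - y)`, which is holomorphic on the closed disc when `|x| < R`.
By the mean value property its average over the circle is its value at `0`, namely `-(I / 2) x`.
-/

open Real Complex ComplexConjugate Metric

/-- The orthogonal projection `u uᵀ v / |u|²` of `v` onto `ℝ u`, viewing `ℂ` as `ℝ²`. -/
noncomputable def lineProj (u v : ℂ) : ℂ := ((conj u * v).re / normSq u : ℝ) * u

lemma lineProj_re (u v : ℂ) :
    (lineProj u v).re = u.re * (u.re * v.re + u.im * v.im) / (u.re ^ 2 + u.im ^ 2) := by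
  rw [lineProj, re_ofReal_mul]
  simp only [mul_re, conj_re, conj_im, normSq_apply]
  ring

lemma lineProj_im (u v : ℂ) :
    (lineProj u v).im = u.im * (u.re * v.re + u.im * v.im) / (u.re ^ 2 + u.im ^ 2) := by
  rw [lineProj, im_ofReal_mul]
  simp only [mul_re, conj_re, conj_im, normSq_apply]
  ring

lemma lineProj_eq_half_add {u : ℂ} (hu : u ≠ 0) (v : ℂ) :
    lineProj u v = (v + u / conj u * conj v) / 2 := by
  have hu' : conj u ≠ 0 := (map_ne_zero _).2 hu
  have hre : (((conj u * v).re : ℝ) : ℂ) = (conj u * v + u * conj v) / 2 := by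
    rw [re_eq_add_conj]; simp [mul_comm]
  rw [lineProj, ofReal_div, hre, ← mul_conj]
  field_simp

noncomputable def rotationKernel (z : ℂ) (R : ℝ) (w : ℂ) : ℂ :=
  I / 2 * (R ^ 2 * (z - w) / (conj z * w - R ^ 2) - w)

lemma lineProj_sub_rotation_of_mem_sphere {z w : ℂ} {R : ℝ} (hw : ‖w‖ = R) (hw₀ : w ≠ 0)
    (hzw : z ≠ w) :
    lineProj (z - w) (-I * w) = rotationKernel z R w := by
  have hww : w * conj w = (R : ℂ) ^ 2 := by rw [mul_conj, ← Complex.sq_norm, hw]; push_cast; ring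
  have hconj : conj z - conj w ≠ 0 := by
    rw [← map_sub]; exact (map_ne_zero _).2 (sub_ne_zero.2 hzw)
  have hden : conj z * w - R ^ 2 = w * (conj z - conj w) := by rw [← hww]; ring
  rw [lineProj_eq_half_add (sub_ne_zero.2 hzw), rotationKernel, hden, map_sub, map_mul, map_neg,
    conj_I]
  field_simp
  linear_combination (z - w) * hww

lemma conj_mul_sub_sq_ne_zero {z w : ℂ} {R : ℝ} (hz : ‖z‖ < R) (hw : ‖w‖ ≤ R) :
    conj z * w - R ^ 2 ≠ 0 := by
  rw [sub_ne_zero]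
  intro h
  have hnorm : ‖z‖ * ‖w‖ = R ^ 2 := by
    simpa [abs_of_nonneg ((norm_nonneg z).trans hz.le)] using congrArg norm h
  nlinarith [norm_nonneg z, norm_nonneg w]

lemma rotationKernel_zero (z : ℂ) {R : ℝ} (hR : R ≠ 0) : rotationKernel z R 0 = -(I / 2) * z := by
  have : (R : ℂ) ≠ 0 := ofReal_ne_zero.2 hR
  simp only [rotationKernel, sub_zero, mul_zero, zero_sub]
  field_simp

section
variable {z : ℂ} {R : ℝ}

lemma differentiableOn_rotationKernel (hz : ‖z‖ < R) :
    DifferentiableOn ℂ (rotationKernel z R) (closedBall 0 R) := by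
  refine ((DifferentiableOn.div (by fun_prop) (by fun_prop) fun w hw => ?_).sub
    differentiableOn_id).const_mul _
  exact conj_mul_sub_sq_ne_zero hz (mem_closedBall_zero_iff.1 hw)

lemma eqOn_sphere_lineProj_sub_rotation (hz : ‖z‖ < R) :
    Set.EqOn (fun w => lineProj (z - w) (-I * w)) (rotationKernel z R) (sphere 0 |R|) := by
  intro w hw
  have hR : 0 < R := (norm_nonneg z).trans_lt hz
  rw [mem_sphere_zero_iff_norm, abs_of_pos hR] at hw
  refine lineProj_sub_rotation_of_mem_sphere hw (norm_pos_iff.1 (hw ▸ hR)) ?_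
  rintro rfl
  exact hz.ne hw

lemma circleIntegrable_lineProj_sub_rotation (hz : ‖z‖ < R) :
    CircleIntegrable (fun w => lineProj (z - w) (-I * w)) 0 R := by
  have hR : 0 ≤ R := (norm_nonneg z).trans hz.le
  refine (circleIntegrable_congr (eqOn_sphere_lineProj_sub_rotation hz)).2 ?_
  exact ((differentiableOn_rotationKernel hz).continuousOn.mono
    sphere_subset_closedBall).circleIntegrable hR

lemma circleAverage_lineProj_sub_rotation (hz : ‖z‖ < R) :
    circleAverage (fun w => lineProj (z - w) (-I * w)) 0 R = -(I / 2) * z := by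
  have hR : 0 < R := (norm_nonneg z).trans_lt hz
  rw [circleAverage_congr_sphere (eqOn_sphere_lineProj_sub_rotation hz),
    DiffContOnCl.circleAverage, rotationKernel_zero z hR.ne']
  rw [abs_of_pos hR]
  exact (differentiableOn_rotationKernel hz).diffContOnCl_ball subset_rfl

end

lemma integral_circleMap_eq_mul_circleAverage {E : Type*} [NormedAddCommGroup E] [NormedSpace ℝ E]
    [CompleteSpace E] (L : E →L[ℝ] ℝ) {f : ℂ → E} {c : ℂ} {R : ℝ} (hf : CircleIntegrable f c R)
    (r : ℝ) :
    ∫ θ in (0 : ℝ)..(2 * π), 1 / (2 * π) * L (f (circleMap c R θ)) * r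
      = r * L (circleAverage f c R) := by
  rw [circleAverage_def, map_smul, ← L.intervalIntegral_comp_comm hf,
    intervalIntegral.integral_mul_const, intervalIntegral.integral_const_mul, smul_eq_mul]
  ring

theorem circle_projection_integral_general (R : ℝ) (x : ℝ × ℝ)
    (hx : Real.sqrt (x.1 ^ 2 + x.2 ^ 2) < R) :
    (∫ θ in (0:ℝ)..(2 * π),
        (1 / (2 * π)) * ((x.1 - R * Real.cos θ) *
          ((x.1 - R * Real.cos θ) * (R * Real.sin θ)
            + (x.2 - R * Real.sin θ) * (-(R * Real.cos θ))) /
          ((x.1 - R * Real.cos θ) ^ 2 + (x.2 - R * Real.sin θ) ^ 2)) * R)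
      = (R / 2) * x.2 ∧
    (∫ θ in (0:ℝ)..(2 * π),
        (1 / (2 * π)) * ((x.2 - R * Real.sin θ) *
          ((x.1 - R * Real.cos θ) * (R * Real.sin θ)
            + (x.2 - R * Real.sin θ) * (-(R * Real.cos θ))) /
          ((x.1 - R * Real.cos θ) ^ 2 + (x.2 - R * Real.sin θ) ^ 2)) * R)
      = (R / 2) * (-x.1) := by
  set z : ℂ := ⟨x.1, x.2⟩
  have hz : ‖z‖ < R := by rwa [norm_def, normSq_mk, ← sq, ← sq]
  have hint := circleIntegrable_lineProj_sub_rotation hz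
  have hre := integral_circleMap_eq_mul_circleAverage reCLM hint R
  have him := integral_circleMap_eq_mul_circleAverage imCLM hint R
  rw [circleAverage_lineProj_sub_rotation hz] at hre him
  simp only [reCLM_apply, imCLM_apply, lineProj_re, lineProj_im, sub_re, sub_im, neg_mul,
    neg_re, neg_im, neg_neg, I_mul_re, I_mul_im, circleMap_zero_re, circleMap_zero_im, z] at hre him
  refine ⟨hre.trans ?_, him.trans ?_⟩ <;>
    simp only [mul_re, mul_im, div_ofNat_re, div_ofNat_im, I_re, I_im] <;> ring

/-- For `x` inside the disk of radius `R`,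
`∫_{∂D} (1/(2π)) ((x-y)(x-y)ᵀ/|x-y|²) (y₂,-y₁)ᵀ ds(y) = (R/2)(x₂,-x₁)ᵀ`. -/
theorem circle_projection_integral (R : ℝ) (hR : 0 < R) (x : ℝ × ℝ)
    (hx : Real.sqrt (x.1 ^ 2 + x.2 ^ 2) < R) :
    (∫ θ in (0:ℝ)..(2 * π),
        (1 / (2 * π)) * ((x.1 - R * Real.cos θ) *
          ((x.1 - R * Real.cos θ) * (R * Real.sin θ)
            + (x.2 - R * Real.sin θ) * (-(R * Real.cos θ))) /
          ((x.1 - R * Real.cos θ) ^ 2 + (x.2 - R * Real.sin θ) ^ 2)) * R)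
      = (R / 2) * x.2 ∧
    (∫ θ in (0:ℝ)..(2 * π),
        (1 / (2 * π)) * ((x.2 - R * Real.sin θ) *
          ((x.1 - R * Real.cos θ) * (R * Real.sin θ)
            + (x.2 - R * Real.sin θ) * (-(R * Real.cos θ))) /
          ((x.1 - R * Real.cos θ) ^ 2 + (x.2 - R * Real.sin θ) ^ 2)) * R)
      = (R / 2) * (-x.1) :=
  circle_projection_integral_general R x hx
end

section
/- Let Γ(x) = α₁ ln|x| I₂ - α₂ (x xᵀ)/|x|² with α₁ = (1/(4π))(1/μ + 1/(2μ+λ)) and α₂ = (1/(4π))(1/μ - 1/(2μ+λ)), and let ζ₃(y) = (1/(2πR³))(y₂, -y₁)ᵀ on the circle ∂D_R of radius R. Then for every x with |x| < R, the single layer potential S_{∂D}[ζ₃](x) := ∫_{∂D_R} Γ(x-y) ζ₃(y) ds(y) equals -(R/(2μ)) ζ₃(x). -/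
/-!
Write `y(θ) = R e^{iθ}`, `p = x₁ + i x₂` and `z = p - y`. The density is `ζ₃(y(θ)) = c z'(θ)`
with `c = 1 / (2πR³)`, so the `α₂` part of the kernel contributes `α₂ c (log |z|)' z_k`.
Integrating by parts over a period turns this into `α₂ c ∫ log |z| z_k'`, the same integral as in
the `α₁` part, and `α₁ + α₂ = 1 / (2πμ)`. What remains are the first Fourier coefficients of
`log |p - y(θ)|`. On the circle `|p - y| = |R - p̄ y / R|`, and `log (R - p̄ w / R)` is
holomorphic near the closed disk, so Cauchy's theorem and Cauchy's formula for the derivative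
at `0` give `∫ log |p - y(θ)| e^{iθ} dθ = -π p / R`.
-/

open Real intervalIntegral Metric ComplexConjugate

section CircleFourier

variable {g : ℂ → ℂ} {U : Set ℂ} {R : ℝ}

theorem integral_comp_circleMap_mul_exp (hR : 0 < R) (hg : DiffContOnCl ℂ g (ball 0 R)) :
    ∫ θ in (0)..(2 * π), g (circleMap 0 R θ) * Complex.exp (θ * Complex.I) = 0 := by
  have h := hg.circleIntegral_eq_zero hR.le
  have hθ : ∀ θ : ℝ, deriv (circleMap 0 R) θ • g (circleMap 0 R θ) =
      R * Complex.I * (g (circleMap 0 R θ) * Complex.exp (θ * Complex.I)) := fun θ => by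
    rw [deriv_circleMap, circleMap_zero, smul_eq_mul]; ring
  rw [circleIntegral, integral_congr fun θ _ => hθ θ, integral_const_mul] at h
  exact (mul_eq_zero.mp h).resolve_left (by simp [hR.ne'])

theorem integral_comp_circleMap_mul_exp_neg (hR : 0 < R) (hU : IsOpen U)
    (hRU : closedBall 0 R ⊆ U) (hg : DifferentiableOn ℂ g U) :
    ∫ θ in (0)..(2 * π), g (circleMap 0 R θ) * Complex.exp (-(θ * Complex.I)) =
      2 * π * R * deriv g 0 := by
  have h := Complex.two_pi_I_inv_smul_circleIntegral_sub_sq_inv_smul_of_differentiable hU hRU hg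
    (mem_ball_self hR)
  have hθ : ∀ θ : ℝ,
      deriv (circleMap 0 R) θ • (((circleMap 0 R θ - 0) ^ 2)⁻¹ • g (circleMap 0 R θ)) =
        Complex.I / R * (g (circleMap 0 R θ) * Complex.exp (-(θ * Complex.I))) := fun θ => by
    have : (R : ℂ) ≠ 0 := by exact_mod_cast hR.ne'
    rw [deriv_circleMap, circleMap_zero, smul_eq_mul, smul_eq_mul, Complex.exp_neg]
    field_simp
    ring
  rw [circleIntegral, integral_congr fun θ _ => hθ θ, integral_const_mul, smul_eq_mul] at h
  generalize ∫ θ in (0)..(2 * π), g (circleMap 0 R θ) * Complex.exp (-(θ * Complex.I)) = J at h ⊢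
  have : (R : ℂ) ≠ 0 := by exact_mod_cast hR.ne'
  rw [← h]
  field_simp

theorem integral_re_comp_circleMap_mul_exp (hR : 0 < R) (hU : IsOpen U)
    (hRU : closedBall 0 R ⊆ U) (hg : DifferentiableOn ℂ g U) :
    ∫ θ in (0)..(2 * π), ((g (circleMap 0 R θ)).re : ℂ) * Complex.exp (θ * Complex.I) =
      π * R * conj (deriv g 0) := by
  have hθ : ∀ θ : ℝ, ((g (circleMap 0 R θ)).re : ℂ) * Complex.exp (θ * Complex.I) =
      (g (circleMap 0 R θ) * Complex.exp (θ * Complex.I) +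
        conj (g (circleMap 0 R θ) * Complex.exp (-(θ * Complex.I)))) / 2 := fun θ => by
    rw [Complex.re_eq_add_conj, map_mul, ← Complex.exp_conj]
    simp only [map_neg, map_mul, Complex.conj_ofReal, Complex.conj_I, neg_neg, mul_neg]
    ring
  have hcont : Continuous fun θ => g (circleMap 0 R θ) :=
    hg.continuousOn.comp_continuous (continuous_circleMap 0 R)
      fun θ => hRU (circleMap_mem_closedBall 0 hR.le θ)
  rw [integral_congr fun θ _ => hθ θ, intervalIntegral.integral_div, integral_add,
    intervalIntegral_conj, integral_comp_circleMap_mul_exp hR (hg.diffContOnCl_ball hRU),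
    integral_comp_circleMap_mul_exp_neg hR hU hRU hg]
  · simp only [map_mul, Complex.conj_ofReal, map_ofNat]
    ring
  · exact (hcont.mul (by fun_prop)).intervalIntegrable _ _
  · exact (Complex.continuous_conj.comp (hcont.mul (by fun_prop))).intervalIntegrable _ _

theorem integral_re_comp_circleMap_mul_cos_sin (hR : 0 < R) (hU : IsOpen U)
    (hRU : closedBall 0 R ⊆ U) (hg : DifferentiableOn ℂ g U) :
    ∫ θ in (0)..(2 * π), (g (circleMap 0 R θ)).re * cos θ = π * R * (deriv g 0).re ∧
    ∫ θ in (0)..(2 * π), (g (circleMap 0 R θ)).re * sin θ = -(π * R * (deriv g 0).im) := by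
  have h := integral_re_comp_circleMap_mul_exp hR hU hRU hg
  have hcont : Continuous fun θ => g (circleMap 0 R θ) :=
    hg.continuousOn.comp_continuous (continuous_circleMap 0 R)
      fun θ => hRU (circleMap_mem_closedBall 0 hR.le θ)
  have hint : IntervalIntegrable
      (fun θ : ℝ => ((g (circleMap 0 R θ)).re : ℂ) * Complex.exp (θ * Complex.I))
      MeasureTheory.volume 0 (2 * π) :=
    ((Complex.continuous_ofReal.comp (Complex.continuous_re.comp hcont)).mul
      (by fun_prop)).intervalIntegrable _ _
  constructor
  · have h := congrArg Complex.re h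
    rw [← Complex.reCLM_apply, ← Complex.reCLM.intervalIntegral_comp_comm hint] at h
    simpa [Complex.exp_ofReal_mul_I_re] using h
  · have h := congrArg Complex.im h
    rw [← Complex.imCLM_apply, ← Complex.imCLM.intervalIntegral_comp_comm hint] at h
    simpa [Complex.exp_ofReal_mul_I_im] using h

end CircleFourier

section LogDistance

variable {x : ℂ} {R : ℝ}

theorem norm_sub_circleMap_eq_norm_reflect (hR : 0 < R) (θ : ℝ) :
    ‖x - circleMap 0 R θ‖ = ‖R - conj x * circleMap 0 R θ / R‖ := by
  set z := circleMap 0 R θ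
  have hR' : (R : ℂ) ≠ 0 := by exact_mod_cast hR.ne'
  have hz : conj z * z = R ^ 2 := by
    rw [Complex.conj_mul', norm_circleMap_zero, abs_of_pos hR]
  have hreflect : (R : ℂ) - conj x * z / R = conj (z - x) * (z / R) := by
    rw [map_sub]; field_simp; linear_combination -hz
  rw [hreflect, norm_mul, Complex.norm_conj, norm_div, norm_circleMap_zero, Complex.norm_real,
    Real.norm_eq_abs, div_self (abs_pos.mpr hR.ne').ne', mul_one, norm_sub_rev]

theorem integral_log_norm_sub_circleMap_mul_cos_sin (hx : ‖x‖ < R) :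
    ∫ θ in (0)..(2 * π), log ‖x - circleMap 0 R θ‖ * cos θ = -(π * x.re / R) ∧
    ∫ θ in (0)..(2 * π), log ‖x - circleMap 0 R θ‖ * sin θ = -(π * x.im / R) := by
  have hR : 0 < R := (norm_nonneg x).trans_lt hx
  set U := {z : ℂ | (R : ℂ) - conj x * z / R ∈ Complex.slitPlane}
  set g : ℂ → ℂ := fun z => Complex.log (R - conj x * z / R)
  have hRU : closedBall 0 R ⊆ U := by
    intro z hz
    have hlt : ‖conj x * z / R‖ < R := by
      rw [norm_div, norm_mul, Complex.norm_conj, Complex.norm_real, Real.norm_eq_abs,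
        abs_of_pos hR, div_lt_iff₀ hR]
      exact mul_lt_mul_of_lt_of_le_of_nonneg_of_pos hx (mem_closedBall_zero_iff.mp hz)
        (norm_nonneg _) hR
    refine Complex.mem_slitPlane_iff.mpr (Or.inl ?_)
    rw [Complex.sub_re, Complex.ofReal_re, sub_pos]
    exact (Complex.re_le_norm _).trans_lt hlt
  have hdiff : DifferentiableOn ℂ g U := fun z hz => by
    refine (DifferentiableAt.clog (f := fun z => (R : ℂ) - conj x * z / R) ?_
      hz).differentiableWithinAt
    exact (differentiableAt_const _).sub ((differentiableAt_id.const_mul _).div_const _)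
  have hderiv : HasDerivAt g (-(conj x / R ^ 2)) 0 := by
    refine ((((hasDerivAt_id (0 : ℂ)).const_mul (conj x)).div_const (R : ℂ)).const_sub
      (R : ℂ) |>.clog (hRU (mem_closedBall_self hR.le))).congr_deriv ?_
    simp only [id, mul_zero, zero_div, sub_zero, mul_one]
    field_simp
  have hθ : ∀ θ : ℝ, log ‖x - circleMap 0 R θ‖ = (g (circleMap 0 R θ)).re := fun θ => by
    rw [Complex.log_re, norm_sub_circleMap_eq_norm_reflect hR]
  obtain ⟨hcos, hsin⟩ := integral_re_comp_circleMap_mul_cos_sin hR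
    (Complex.isOpen_slitPlane.preimage (by fun_prop)) hRU hdiff
  simp_rw [hθ]
  rw [hcos, hsin, hderiv.deriv, ← Complex.ofReal_pow, Complex.neg_re, Complex.neg_im,
    Complex.div_ofReal_re, Complex.div_ofReal_im, Complex.conj_re, Complex.conj_im]
  constructor <;> field_simp

end LogDistance

theorem norm_add_mul_I_sub_circleMap (a b R θ : ℝ) :
    ‖(a + b * Complex.I : ℂ) - circleMap 0 R θ‖ =
      √((a - R * cos θ) ^ 2 + (b - R * sin θ) ^ 2) := by
  rw [← Complex.norm_add_mul_I]
  congr 1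
  apply Complex.ext <;>
    simp [circleMap_zero_re, circleMap_zero_im, Complex.cos_ofReal_re, Complex.sin_ofReal_re]

theorem sq_add_sq_sub_circle_pos {a b R : ℝ} (h : ‖(a + b * Complex.I : ℂ)‖ < R) (θ : ℝ) :
    0 < (a - R * cos θ) ^ 2 + (b - R * sin θ) ^ 2 := by
  rw [← sqrt_pos, ← norm_add_mul_I_sub_circleMap, norm_pos_iff, sub_ne_zero]
  intro hcirc
  have hR : 0 ≤ R := (norm_nonneg _).trans h.le
  rw [hcirc, norm_circleMap_zero, abs_of_nonneg hR] at h
  exact lt_irrefl R h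

theorem hasDerivAt_log_sqrt_sq_add_sq {f g : ℝ → ℝ} {f' g' t : ℝ} (hf : HasDerivAt f f' t)
    (hg : HasDerivAt g g' t) (hfg : f t ^ 2 + g t ^ 2 ≠ 0) :
    HasDerivAt (fun s => log √(f s ^ 2 + g s ^ 2))
      ((f t * f' + g t * g') / (f t ^ 2 + g t ^ 2)) t := by
  have hlog : (fun s => log √(f s ^ 2 + g s ^ 2)) = fun s => log (f s ^ 2 + g s ^ 2) / 2 := by
    ext s; rw [log_sqrt (by positivity)]
  rw [hlog]
  refine ((((hf.fun_pow 2).fun_add (hg.fun_pow 2)).log hfg).div_const 2).congr_deriv ?_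
  field_simp
  ring

section Kelvin

variable {a b R : ℝ}

theorem integral_kelvin_tangential {h h' : ℝ → ℝ} (α₁ α₂ c : ℝ)
    (hD : ∀ θ, (a - R * cos θ) ^ 2 + (b - R * sin θ) ^ 2 ≠ 0)
    (hh : ∀ θ, HasDerivAt h (h' θ) θ) (hh' : Continuous h') (hper : h (2 * π) = h 0) :
    ∫ θ in (0)..(2 * π),
        (α₁ * log √((a - R * cos θ) ^ 2 + (b - R * sin θ) ^ 2) * (c * h' θ)
          - α₂ * (((a - R * cos θ) * (c * (R * sin θ)) + (b - R * sin θ) * (c * -(R * cos θ)))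
            / ((a - R * cos θ) ^ 2 + (b - R * sin θ) ^ 2)) * h θ) * R
      = (α₁ + α₂) * c * R *
          ∫ θ in (0)..(2 * π), log √((a - R * cos θ) ^ 2 + (b - R * sin θ) ^ 2) * h' θ := by
  set L := fun θ => log √((a - R * cos θ) ^ 2 + (b - R * sin θ) ^ 2)
  set Q := fun θ => ((a - R * cos θ) * (R * sin θ) + (b - R * sin θ) * -(R * cos θ))
    / ((a - R * cos θ) ^ 2 + (b - R * sin θ) ^ 2)
  have hL : ∀ θ, HasDerivAt L (Q θ) θ := fun θ =>
    hasDerivAt_log_sqrt_sq_add_sq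
      (((hasDerivAt_cos θ).const_mul R).const_sub a |>.congr_deriv (by ring))
      (((hasDerivAt_sin θ).const_mul R).const_sub b) (hD θ)
  have hcont_h : Continuous h := continuous_iff_continuousAt.2 fun θ => (hh θ).continuousAt
  have hcont_L : Continuous L := continuous_iff_continuousAt.2 fun θ => (hL θ).continuousAt
  have hcont_Q : Continuous Q := Continuous.div (by fun_prop) (by fun_prop) hD
  have hboundary : ∫ θ in (0)..(2 * π), (Q θ * h θ + L θ * h' θ) = 0 := by
    rw [integral_eq_sub_of_hasDerivAt (fun θ _ => (hL θ).fun_mul (hh θ))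
      (((hcont_Q.mul hcont_h).add (hcont_L.mul hh')).intervalIntegrable _ _), hper]
    simp [L, cos_two_pi, sin_two_pi]
  have hθ : ∀ θ, (α₁ * L θ * (c * h' θ) - α₂ * (((a - R * cos θ) * (c * (R * sin θ))
        + (b - R * sin θ) * (c * -(R * cos θ))) / ((a - R * cos θ) ^ 2 + (b - R * sin θ) ^ 2))
          * h θ) * R
      = (α₁ + α₂) * c * R * (L θ * h' θ) - α₂ * c * R * (Q θ * h θ + L θ * h' θ) := fun θ => by
    simp only [Q]; ring
  rw [integral_congr fun θ _ => hθ θ, integral_sub, integral_const_mul, integral_const_mul,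
    hboundary, mul_zero, sub_zero]
  · exact ((hcont_L.mul hh').const_mul _).intervalIntegrable _ _
  · exact (((hcont_Q.mul hcont_h).add (hcont_L.mul hh')).const_mul _).intervalIntegrable _ _

end Kelvin

theorem single_layer_zeta3_general (l m R : ℝ) (hm : 0 < m) (hR : 0 < R)
    (x : ℝ × ℝ) (hx : Real.sqrt (x.1 ^ 2 + x.2 ^ 2) < R) :
    let α₁ : ℝ := (1 / (4 * π)) * (1 / m + 1 / (2 * m + l))
    let α₂ : ℝ := (1 / (4 * π)) * (1 / m - 1 / (2 * m + l))
    let z₁ : ℝ → ℝ := fun θ => x.1 - R * Real.cos θ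
    let z₂ : ℝ → ℝ := fun θ => x.2 - R * Real.sin θ
    let v₁ : ℝ → ℝ := fun θ => (1 / (2 * π * R ^ 3)) * (R * Real.sin θ)
    let v₂ : ℝ → ℝ := fun θ => (1 / (2 * π * R ^ 3)) * (-(R * Real.cos θ))
    (∫ θ in (0:ℝ)..(2 * π),
        (α₁ * Real.log (Real.sqrt (z₁ θ ^ 2 + z₂ θ ^ 2)) * v₁ θ
          - α₂ * ((z₁ θ * v₁ θ + z₂ θ * v₂ θ) / (z₁ θ ^ 2 + z₂ θ ^ 2)) * z₁ θ) * R)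
      = -(R / (2 * m)) * ((1 / (2 * π * R ^ 3)) * x.2) ∧
    (∫ θ in (0:ℝ)..(2 * π),
        (α₁ * Real.log (Real.sqrt (z₁ θ ^ 2 + z₂ θ ^ 2)) * v₂ θ
          - α₂ * ((z₁ θ * v₁ θ + z₂ θ * v₂ θ) / (z₁ θ ^ 2 + z₂ θ ^ 2)) * z₂ θ) * R)
      = -(R / (2 * m)) * ((1 / (2 * π * R ^ 3)) * (-x.1)) := by
  intro α₁ α₂ z₁ z₂ v₁ v₂
  have hp : ‖(x.1 + x.2 * Complex.I : ℂ)‖ < R := by rwa [Complex.norm_add_mul_I]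
  have hD θ := (sq_add_sq_sub_circle_pos hp θ).ne'
  obtain ⟨hcos, hsin⟩ := integral_log_norm_sub_circleMap_mul_cos_sin hp
  simp only [norm_add_mul_I_sub_circleMap, Complex.add_re, Complex.add_im, Complex.ofReal_re,
    Complex.ofReal_im, Complex.mul_re, Complex.mul_im, Complex.I_re, Complex.I_im] at hcos hsin
  have hα : α₁ + α₂ = 1 / (2 * π * m) := by
    simp only [α₁, α₂]; field_simp; ring
  refine ⟨(integral_kelvin_tangential α₁ α₂ _ hD (h := z₁) (h' := fun θ => R * sin θ)
      (fun θ => ((hasDerivAt_cos θ).const_mul R).const_sub x.1 |>.congr_deriv (by ring))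
      (by fun_prop) (by simp [z₁])).trans ?_,
    (integral_kelvin_tangential α₁ α₂ _ hD (h := z₂) (h' := fun θ => -(R * cos θ))
      (fun θ => ((hasDerivAt_sin θ).const_mul R).const_sub x.2)
      (by fun_prop) (by simp [z₂])).trans ?_⟩
  · simp_rw [mul_left_comm _ R]
    rw [integral_const_mul, hsin, hα]
    field_simp
    ring
  · simp_rw [mul_neg, mul_left_comm _ R, integral_neg, integral_const_mul, hcos, hα]
    field_simp
    ring

/-- Single layer potential of the Kelvin matrix `Γ` applied to `ζ₃` on the circle of radius `R`:
for `x` in the open disk, `S_{∂D}[ζ₃](x) = -(R/(2μ)) ζ₃(x)`.  Here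
`Γ(z)v = α₁ ln|z| v - α₂ ((z·v)/|z|²) z`, `ζ₃(y) = (1/(2πR³)) (y₂,-y₁)ᵀ`, the circle is
parametrized by `y = (R cos θ, R sin θ)` and `ds = R dθ`. -/
theorem single_layer_zeta3 (l m R : ℝ) (hm : 0 < m) (h2 : 0 < 2 * m + l) (hR : 0 < R)
    (x : ℝ × ℝ) (hx : Real.sqrt (x.1 ^ 2 + x.2 ^ 2) < R) :
    let α₁ : ℝ := (1 / (4 * π)) * (1 / m + 1 / (2 * m + l))
    let α₂ : ℝ := (1 / (4 * π)) * (1 / m - 1 / (2 * m + l))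
    let z₁ : ℝ → ℝ := fun θ => x.1 - R * Real.cos θ
    let z₂ : ℝ → ℝ := fun θ => x.2 - R * Real.sin θ
    let v₁ : ℝ → ℝ := fun θ => (1 / (2 * π * R ^ 3)) * (R * Real.sin θ)
    let v₂ : ℝ → ℝ := fun θ => (1 / (2 * π * R ^ 3)) * (-(R * Real.cos θ))
    (∫ θ in (0:ℝ)..(2 * π),
        (α₁ * Real.log (Real.sqrt (z₁ θ ^ 2 + z₂ θ ^ 2)) * v₁ θ
          - α₂ * ((z₁ θ * v₁ θ + z₂ θ * v₂ θ) / (z₁ θ ^ 2 + z₂ θ ^ 2)) * z₁ θ) * R)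
      = -(R / (2 * m)) * ((1 / (2 * π * R ^ 3)) * x.2) ∧
    (∫ θ in (0:ℝ)..(2 * π),
        (α₁ * Real.log (Real.sqrt (z₁ θ ^ 2 + z₂ θ ^ 2)) * v₂ θ
          - α₂ * ((z₁ θ * v₁ θ + z₂ θ * v₂ θ) / (z₁ θ ^ 2 + z₂ θ ^ 2)) * z₂ θ) * R)
      = -(R / (2 * m)) * ((1 / (2 * π * R ^ 3)) * (-x.1)) :=
  single_layer_zeta3_general l m R hm hR x hx
end
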